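/- arXiv:math/0104176 — 4 statements merged into one kernel-verified Lean document; each statement's English description precedes it below -/
import Mathlib

section
/- The double integral Z(w,s) = ∫₀^∞ θ(t²)^s · θ(1/t²)^{w-s} dt/t converges absolutely for all complex (w,s) with Re(w) < Re(s) < 0, where θ(t) = Σ_{n∈ℤ} e^{-πn²t}. -/
open MeasureTheory Set Complex

/-- The Jacobi theta function `θ(t) = ∑_{n ∈ ℤ} e^{-π n² t}` for real `t`. -/
noncomputable def theta (t : ℝ) : ℝ := ∑' n : ℤ, Real.exp (-Real.pi * (n : ℝ)^2 * t)

lemma theta_summable {x : ℝ} (hx : 0 < x) :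
    Summable fun n : ℤ => Real.exp (-Real.pi * (n : ℝ)^2 * x) := by
  have hr : Real.exp (-Real.pi * x) < 1 :=
    Real.exp_lt_one_iff.mpr (mul_neg_of_neg_of_pos (neg_lt_zero.mpr Real.pi_pos) hx)
  have hgeo : Summable fun n : ℕ => Real.exp (-Real.pi * x) ^ n :=
    summable_geometric_of_lt_one (Real.exp_pos _).le hr
  have hZ : Summable fun n : ℤ => Real.exp (-Real.pi * x) ^ n.natAbs :=
    Summable.of_nat_of_neg (by simpa using hgeo) (by simpa using hgeo)
  refine hZ.of_nonneg_of_le (fun n => (Real.exp_pos _).le) fun n => ?_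
  have h1 : Real.exp (-Real.pi * (n:ℝ)^2 * x) = Real.exp (-Real.pi * x) ^ (n.natAbs ^ 2) := by
    rw [← Real.exp_nat_mul]
    congr 1
    have : ((n.natAbs : ℝ)) ^ 2 = (n : ℝ) ^ 2 := by
      rw [Nat.cast_natAbs, Int.cast_abs, _root_.sq_abs]
    push_cast
    rw [this]; ring
  rw [h1]
  exact pow_le_pow_of_le_one (Real.exp_pos _).le hr.le
    ((sq n.natAbs).symm ▸ n.natAbs.le_mul_self)

lemma theta_ge_one {x : ℝ} (hx : 0 < x) : 1 ≤ theta x := by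
  have hs := theta_summable hx
  have := hs.le_tsum 0 (fun i _ => (Real.exp_pos _).le)
  simpa [theta] using this

lemma theta_eq (x : ℝ) : ((theta x : ℝ) : ℂ) = jacobiTheta (x * I) := by
  rw [theta, jacobiTheta, Complex.ofReal_tsum]
  refine tsum_congr fun n => ?_
  rw [Complex.ofReal_exp]
  congr 1
  have : (Real.pi : ℂ) * I * (n : ℂ) ^ 2 * ((x : ℂ) * I) =
      ((Real.pi : ℂ) * (n : ℂ) ^ 2 * (x : ℂ)) * (I * I) := by ring
  rw [this, Complex.I_mul_I]
  push_cast
  ring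

lemma theta_funEq {t : ℝ} (ht : 0 < t) : theta (1/t^2) = t * theta (t^2) := by
  have him : (0:ℝ) < (((t^2 : ℝ) : ℂ) * I).im := by
    rw [Complex.mul_I_im, Complex.ofReal_re]
    positivity
  set τ : UpperHalfPlane := ⟨((t^2 : ℝ) : ℂ) * I, him⟩ with hτ
  have h := jacobiTheta_S_smul τ
  rw [UpperHalfPlane.modular_S_smul] at h
  simp only [UpperHalfPlane.coe_mk] at h
  have hcoe : (τ : ℂ) = ((t^2 : ℝ) : ℂ) * I := rfl
  have ht2 : ((t : ℂ))^2 ≠ 0 := pow_ne_zero _ (by exact_mod_cast ht.ne')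
  have hinv : (-(τ : ℂ))⁻¹ = ((1/t^2 : ℝ) : ℂ) * I := by
    apply inv_eq_of_mul_eq_one_right
    rw [hcoe]
    push_cast
    rw [show -((t:ℂ)^2 * I) * (1/(t:ℂ)^2 * I) = -(I*I) * ((t:ℂ)^2/(t:ℂ)^2) by ring,
      Complex.I_mul_I, div_self ht2]
    norm_num
  have hbase : (-I * (τ : ℂ)) = ((t^2 : ℝ) : ℂ) := by
    rw [hcoe, show -I * (((t^2:ℝ):ℂ) * I) = -(I*I) * ((t^2:ℝ):ℂ) by ring, Complex.I_mul_I]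
    norm_num
  have hpow : (((t^2 : ℝ) : ℂ)) ^ (1/2 : ℂ) = (t : ℂ) := by
    have h12 : (1/2 : ℂ) = ((1/2 : ℝ) : ℂ) := by norm_num
    rw [h12, ← Complex.ofReal_cpow (by positivity)]
    congr 1
    rw [← Real.rpow_natCast t 2, ← Real.rpow_mul ht.le]
    norm_num
  rw [hinv, hbase, hpow, hcoe, ← theta_eq, ← theta_eq] at h
  exact_mod_cast h

lemma theta_continuousAt {x : ℝ} (hx : 0 < x) : ContinuousAt theta x := by
  have key : theta = fun y : ℝ => (jacobiTheta ((y : ℂ) * I)).re := by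
    funext y
    rw [← theta_eq, Complex.ofReal_re]
  rw [key]
  have hj : ContinuousAt (fun y : ℝ => jacobiTheta ((y : ℂ) * I)) x :=
    (continuousAt_jacobiTheta (by simpa using hx)).comp
      ((Complex.continuous_ofReal.mul continuous_const).continuousAt)
  exact Complex.continuous_re.continuousAt.comp hj

/-- absolute convergence of `∫₀^∞ θ(t²)^s θ(1/t²)^{w-s} dt/t`
for `Re(w) < Re(s) < 0`. -/
theorem Z_integrable (w s : ℂ) (h1 : w.re < s.re) (h2 : s.re < 0) :
    MeasureTheory.IntegrableOn
      (fun t : ℝ => ((theta (t^2) : ℂ)) ^ s * ((theta (1/t^2) : ℂ)) ^ (w - s) / t)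
      (Set.Ioi 0) := by
  set f : ℝ → ℂ := fun t => ((theta (t^2) : ℂ)) ^ s * ((theta (1/t^2) : ℂ)) ^ (w - s) / t
    with hf
  have hθ1 : ∀ t : ℝ, 0 < t → 1 ≤ theta (t^2) := fun t ht => theta_ge_one (by positivity)
  have hθ2 : ∀ t : ℝ, 0 < t → 1 ≤ theta (1/t^2) := fun t ht => theta_ge_one (by positivity)
  -- measurability
  have hmeas : AEStronglyMeasurable f (volume.restrict (Ioi (0:ℝ))) := by
    apply ContinuousOn.aestronglyMeasurable _ measurableSet_Ioi
    intro t ht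
    have ht : (0:ℝ) < t := ht
    apply ContinuousAt.continuousWithinAt
    have hsq : ContinuousAt (fun u : ℝ => theta (u^2)) t :=
      (theta_continuousAt (by positivity)).comp ((continuous_pow 2).continuousAt)
    have hinv2 : ContinuousAt (fun u : ℝ => theta (1/u^2)) t :=
      (theta_continuousAt (by positivity)).comp
        (ContinuousAt.div continuousAt_const ((continuous_pow 2).continuousAt)
          (by positivity))
    have hc1 : ContinuousAt (fun u : ℝ => ((theta (u^2) : ℝ) : ℂ) ^ s) t :=
      (Complex.continuous_ofReal.continuousAt.comp hsq).cpow continuousAt_const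
        (by left; simpa using lt_of_lt_of_le one_pos (hθ1 t ht))
    have hc2 : ContinuousAt (fun u : ℝ => ((theta (1/u^2) : ℝ) : ℂ) ^ (w - s)) t :=
      (Complex.continuous_ofReal.continuousAt.comp hinv2).cpow continuousAt_const
        (by left; simpa using lt_of_lt_of_le one_pos (hθ2 t ht))
    exact (hc1.mul hc2).div (Complex.continuous_ofReal.continuousAt)
      (by exact_mod_cast ht.ne')
  -- norm formula
  have hnorm : ∀ t : ℝ, 0 < t →
      ‖f t‖ = theta (t^2) ^ s.re * theta (1/t^2) ^ (w - s).re / t := by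
    intro t ht
    have hp1 : (0:ℝ) < theta (t^2) := lt_of_lt_of_le one_pos (hθ1 t ht)
    have hp2 : (0:ℝ) < theta (1/t^2) := lt_of_lt_of_le one_pos (hθ2 t ht)
    rw [hf]
    simp only [norm_div, norm_mul]
    rw [Complex.norm_cpow_eq_rpow_re_of_pos hp1, Complex.norm_cpow_eq_rpow_re_of_pos hp2,
      Complex.norm_real, Real.norm_eq_abs, abs_of_pos ht]
  have hsplit : Ioi (0:ℝ) = Ioc 0 1 ∪ Ioi 1 := (Set.Ioc_union_Ioi_eq_Ioi zero_le_one).symm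
  rw [hsplit]
  apply MeasureTheory.IntegrableOn.union
  · -- on (0, 1]
    apply MeasureTheory.Integrable.mono'
      (g := fun t : ℝ => t ^ (-s.re - 1))
    · exact (intervalIntegral.intervalIntegrable_rpow' (by linarith)).1
    · exact hmeas.mono_set Set.Ioc_subset_Ioi_self
    · rw [ae_restrict_iff' measurableSet_Ioc]
      filter_upwards with t htm
      obtain ⟨ht, ht1⟩ := htm
      rw [hnorm t ht]
      have hle : 1/t ≤ theta (t^2) := by
        rw [div_le_iff₀ ht]
        nlinarith [hθ2 t ht, theta_funEq ht]
      have e1 : theta (t^2) ^ s.re ≤ (1/t) ^ s.re :=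
        Real.rpow_le_rpow_of_nonpos (by positivity) hle h2.le
      have e2 : theta (1/t^2) ^ (w - s).re ≤ 1 :=
        Real.rpow_le_one_of_one_le_of_nonpos (hθ2 t ht)
          (by simp only [Complex.sub_re]; linarith)
      calc theta (t^2) ^ s.re * theta (1/t^2) ^ (w - s).re / t
          ≤ (1/t) ^ s.re * 1 / t := by
            gcongr
            exact Real.rpow_nonneg (le_trans zero_le_one (hθ2 t ht)) _
        _ = t ^ (-s.re) / t := by
            rw [mul_one, one_div, Real.inv_rpow ht.le, ← Real.rpow_neg ht.le]
        _ = t ^ (-s.re - 1) := by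
            rw [Real.rpow_sub ht, Real.rpow_one]
  · -- on (1, ∞)
    apply MeasureTheory.Integrable.mono'
      (g := fun t : ℝ => t ^ ((w - s).re - 1))
    · exact (integrableOn_Ioi_rpow_iff zero_lt_one).mpr
        (by simp only [Complex.sub_re]; linarith)
    · exact hmeas.mono_set (Set.Ioi_subset_Ioi zero_le_one)
    · rw [ae_restrict_iff' measurableSet_Ioi]
      filter_upwards with t ht1
      have ht : (0:ℝ) < t := lt_trans one_pos ht1
      rw [hnorm t ht]
      have hle : t ≤ theta (1/t^2) := by
        rw [theta_funEq ht]
        nlinarith [hθ1 t ht]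
      have e1 : theta (t^2) ^ s.re ≤ 1 :=
        Real.rpow_le_one_of_one_le_of_nonpos (hθ1 t ht) h2.le
      have e2 : theta (1/t^2) ^ (w - s).re ≤ t ^ (w - s).re :=
        Real.rpow_le_rpow_of_nonpos ht hle (by simp only [Complex.sub_re]; linarith)
      calc theta (t^2) ^ s.re * theta (1/t^2) ^ (w - s).re / t
          ≤ 1 * t ^ (w - s).re / t := by
            gcongr
            exact Real.rpow_nonneg (le_trans zero_le_one (hθ2 t ht)) _
        _ = t ^ ((w - s).re - 1) := by
            rw [one_mul, Real.rpow_sub ht, Real.rpow_one]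
end

section
/- The Jacobi triple product formula: for |q| < 1 and all z ∈ ℂ, Σ_{n∈ℤ} e^{2πinz} q^{n²} = ∏_{n≥1} (1 - q^{2n})(1 + e^{2πiz} q^{2n-1})(1 + e^{-2πiz} q^{2n-1}). -/
open Finset Filter Topology

namespace JTP


/-- Gaussian binomial coefficients (with the `t`-power weight included):
`gg t M k` is the coefficient of `y^k` in `∏_{j<M} (1 + y t^j)`. -/
def gg (t : ℂ) : ℕ → ℕ → ℂ
  | 0, 0 => 1
  | 0, _+1 => 0
  | _+1, 0 => 1
  | M+1, k+1 => gg t M (k+1) + t^M * gg t M k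

lemma gg_zero_right (t : ℂ) (M : ℕ) : gg t M 0 = 1 := by cases M <;> rfl

lemma gg_succ (t : ℂ) (M k : ℕ) :
    gg t (M+1) (k+1) = gg t M (k+1) + t^M * gg t M k := rfl

lemma gg_eq_zero (t : ℂ) : ∀ M k, M < k → gg t M k = 0 := by
  intro M
  induction M with
  | zero => intro k hk; match k, hk with | k+1, _ => rfl
  | succ M ih =>
    intro k hk
    match k, hk with
    | k+1, hk =>
      rw [gg_succ, ih _ (by omega), ih _ (by omega)]
      ring

lemma gauss (t : ℂ) (y : ℂ) : ∀ M : ℕ,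
    ∏ j ∈ range M, (1 + y * t^j) = ∑ k ∈ range (M+1), gg t M k * y^k := by
  intro M
  induction M with
  | zero => simp [gg]
  | succ M ih =>
    rw [prod_range_succ, ih]
    have h1 : ∑ k ∈ range (M+2), gg t (M+1) k * y^k
        = 1 + ∑ k ∈ range (M+1), (gg t M (k+1) + t^M * gg t M k) * y^(k+1) := by
      rw [Finset.sum_range_succ']
      simp only [gg_succ, gg_zero_right, pow_zero, mul_one]
      ring
    have h2 : ∑ k ∈ range (M+1), gg t M k * y^k
        = 1 + ∑ k ∈ range (M+1), gg t M (k+1) * y^(k+1) := by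
      rw [Finset.sum_range_succ']
      rw [Finset.sum_range_succ, gg_eq_zero t M (M+1) (by omega)]
      simp [gg_zero_right, add_comm]
    have key : (∑ k ∈ range (M+1), gg t M k * y^k) * (1 + y*t^M)
        = (∑ k ∈ range (M+1), gg t M k * y^k)
          + ∑ k ∈ range (M+1), t^M * gg t M k * y^(k+1) := by
      rw [mul_add, mul_one, Finset.sum_mul]
      congr 1
      exact Finset.sum_congr rfl (fun k _ => by ring)
    rw [h1, key, h2]
    simp only [add_mul, Finset.sum_add_distrib]
    ring


/-- partial products of `∏ (1 - t^{j+1})`. -/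
noncomputable def PP (t : ℂ) (m : ℕ) : ℂ := ∏ j ∈ range m, (1 - t^(j+1))

lemma PP_succ (t : ℂ) (m : ℕ) : PP t (m+1) = PP t m * (1 - t^(m+1)) :=
  prod_range_succ _ _

/-- Closed form (in multiplied-through shape) for the Gaussian binomials. -/
lemma gg_closed (t : ℂ) : ∀ M k, k ≤ M →
    gg t M k * PP t (M-k) * PP t k = t^(k.choose 2) * PP t M := by
  intro M
  induction M with
  | zero =>
    intro k hk
    interval_cases k
    simp [gg_zero_right, PP]
  | succ M ih =>
    intro k hk
    match k with
    | 0 => simp [gg_zero_right, PP]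
    | k+1 =>
      rw [gg_succ]
      rcases eq_or_lt_of_le hk with h | h
      · -- k+1 = M+1, i.e. k = M
        have hk' : k = M := by omega
        subst hk'
        rw [gg_eq_zero t k (k+1) (by omega)]
        have e1 : k + 1 - (k+1) = 0 := by omega
        rw [e1]
        have hP0 : PP t 0 = 1 := by simp [PP]
        have ihk := ih k le_rfl
        rw [show k - k = 0 from by omega, hP0, mul_one] at ihk
        have e3 : (k+1).choose 2 = k.choose 2 + k := by
          rw [Nat.choose_succ_succ, Nat.choose_one_right, add_comm]
        rw [hP0, e3]
        calc (0 + t^k * gg t k k) * 1 * PP t (k+1)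
            = t^k * (gg t k k * PP t k) * (1 - t^(k+1)) := by rw [PP_succ]; ring
          _ = t^k * (t^(k.choose 2) * PP t k) * (1 - t^(k+1)) := by rw [ihk]
          _ = t^(k.choose 2 + k) * PP t (k+1) := by rw [PP_succ, pow_add]; ring
      · -- k+1 ≤ M
        have hkM : k + 1 ≤ M := by omega
        set m := M - (k+1) with hm
        have hM : M = m + (k+1) := by omega
        have ih1 := ih (k+1) hkM
        have ih2 := ih k (by omega)
        have e1 : M + 1 - (k+1) = m + 1 := by omega
        have e2 : M - (k+1) = m := rfl
        have e2' : M - k = m + 1 := by omega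
        rw [e2] at ih1
        rw [e2'] at ih2
        have e3 : (k+1).choose 2 = k.choose 2 + k := by
          rw [Nat.choose_succ_succ, Nat.choose_one_right, add_comm]
        rw [e1]
        calc (gg t M (k+1) + t^M * gg t M k) * PP t (m+1) * PP t (k+1)
            = (gg t M (k+1) * PP t m * PP t (k+1)) * (1 - t^(m+1))
              + t^M * (gg t M k * PP t (m+1) * PP t k) * (1 - t^(k+1)) := by
              rw [PP_succ t m, PP_succ t k]; ring
          _ = t^((k+1).choose 2) * PP t M * (1 - t^(m+1))
              + t^M * (t^(k.choose 2) * PP t M) * (1 - t^(k+1)) := by rw [ih1, ih2]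
          _ = t^((k+1).choose 2) * PP t (M+1) := by
              rw [PP_succ t M, e3, hM, pow_add]
              ring

lemma hasProd_zero_of_factor_zero {f : ℕ → ℂ} {j : ℕ} (hj : f j = 0) : HasProd f 0 := by
  have h : ∀ᶠ s : Finset ℕ in atTop, ∏ i ∈ s, f i = 0 := by
    filter_upwards [Filter.eventually_ge_atTop {j}] with s hs
    exact Finset.prod_eq_zero (by simpa using hs) hj
  exact (tendsto_const_nhds.congr' (h.mono (fun s hs => hs.symm)))

lemma summable_log_aux (c ρ : ℂ) (hρ : ‖ρ‖ < 1) :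
    Summable (fun n : ℕ => Complex.log (1 + c * ρ^n)) := by
  have hgeo : Summable (fun n : ℕ => (3/2 : ℝ) * (‖c‖ * ‖ρ‖^n)) :=
    ((summable_geometric_of_lt_one (norm_nonneg ρ) hρ).mul_left ‖c‖).mul_left _
  apply Summable.of_norm_bounded_eventually hgeo
  rw [Nat.cofinite_eq_atTop]
  have hsm : Tendsto (fun n : ℕ => ‖c‖ * ‖ρ‖^n) atTop (𝓝 0) := by
    simpa using (tendsto_pow_atTop_nhds_zero_of_norm_lt_one
      (by simpa using hρ)).const_mul ‖c‖
  filter_upwards [hsm.eventually_le_const (by norm_num : (0:ℝ) < 1/2)] with n hn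
  have h1 : ‖c * ρ^n‖ ≤ 1/2 := by
    rw [norm_mul, norm_pow]; exact hn
  calc ‖Complex.log (1 + c * ρ^n)‖ ≤ (3/2) * ‖c * ρ^n‖ :=
        Complex.norm_log_one_add_half_le_self h1
    _ ≤ (3/2) * (‖c‖ * ‖ρ‖^n) := by rw [norm_mul, norm_pow]

lemma hasProd_aux (c ρ : ℂ) (hρ : ‖ρ‖ < 1) (h : ∀ n : ℕ, 1 + c * ρ^n ≠ 0) :
    HasProd (fun n : ℕ => 1 + c * ρ^n)
      (Complex.exp (∑' n : ℕ, Complex.log (1 + c * ρ^n))) := by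
  have hs := (summable_log_aux c ρ hρ).hasSum.cexp
  have he : (fun n : ℕ => Complex.exp (Complex.log (1 + c * ρ^n)))
      = fun n : ℕ => 1 + c * ρ^n := funext fun n => Complex.exp_log (h n)
  rw [Function.comp_def, he] at hs
  exact hs


section
variable {t : ℂ} (ht : ‖t‖ < 1)
include ht

lemma one_sub_pow_ne (n : ℕ) : (1 : ℂ) - t^(n+1) ≠ 0 := by
  intro h
  have h2 : ‖t^(n+1)‖ < 1 := by
    rw [norm_pow]
    exact pow_lt_one₀ (norm_nonneg t) ht (by omega)
  have : t^(n+1) = 1 := by linear_combination -h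
  rw [this] at h2; simp at h2

lemma hasProd_PP_aux : ∃ L : ℂ, L ≠ 0 ∧ HasProd (fun n : ℕ => 1 - t^(n+1)) L := by
  have hrw : (fun n : ℕ => 1 + (-t) * t^n) = (fun n : ℕ => 1 - t^(n+1)) := by
    funext n; rw [pow_succ']; ring
  have h := hasProd_aux (-t) t ht (fun n => by rw [congrFun hrw n]; exact one_sub_pow_ne ht n)
  rw [hrw] at h
  exact ⟨_, Complex.exp_ne_zero _, h⟩

/-- Uniform two-sided bounds and convergence for the partial products `PP`. -/
lemma PP_facts : ∃ (L : ℂ) (Cp Ci : ℝ), L ≠ 0 ∧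
    Tendsto (PP t) atTop (𝓝 L) ∧
    (∀ m, ‖PP t m‖ ≤ Cp) ∧ (∀ m, ‖(PP t m)⁻¹‖ ≤ Ci) := by
  obtain ⟨L, hL0, hL⟩ := hasProd_PP_aux ht
  have htend : Tendsto (PP t) atTop (𝓝 L) := hL.tendsto_prod_nat
  obtain ⟨Cp, hCp⟩ := htend.norm.bddAbove_range
  obtain ⟨Ci, hCi⟩ := ((htend.inv₀ hL0).norm).bddAbove_range
  refine ⟨L, Cp, Ci, hL0, htend, fun m => ?_, fun m => ?_⟩
  · exact hCp (Set.mem_range_self m)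
  · exact hCi (Set.mem_range_self m)

lemma PP_ne_zero (m : ℕ) : PP t m ≠ 0 :=
  Finset.prod_ne_zero_iff.mpr (fun j _ => one_sub_pow_ne ht j)

end

lemma two_choose_two (k : ℕ) : (2 * (k.choose 2) : ℤ) = (k:ℤ) * ((k:ℤ)-1) := by
  induction k with
  | zero => simp
  | succ j ih =>
    rw [Nat.choose_succ_succ, Nat.choose_one_right]
    push_cast at ih ⊢
    linarith [ih]

lemma prod_zpow_sum (q : ℂ) (hq : q ≠ 0) (N : ℕ) (a : ℕ → ℤ) :
    ∏ j ∈ range N, q ^ (a j) = q ^ (∑ j ∈ range N, a j) := by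
  induction N with
  | zero => simp
  | succ n ih => rw [prod_range_succ, sum_range_succ, ih, zpow_add₀ hq]

lemma sum_odd_int (N : ℕ) : ∑ j ∈ range N, (-(2*(j:ℤ)+1)) = -(N:ℤ)^2 := by
  induction N with
  | zero => simp
  | succ n ih =>
    rw [sum_range_succ, ih]
    push_cast
    ring

end JTP

open JTP Finset Filter Topology

/-- the Jacobi triple product formula: for `|q| < 1` and all `z ∈ ℂ`,
`∑_{n∈ℤ} e^{2πinz} q^{n²} = ∏_{n≥1} (1-q^{2n})(1+e^{2πiz}q^{2n-1})(1+e^{-2πiz}q^{2n-1})`. -/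
theorem jacobi_triple_product (q z : ℂ) (hq : ‖q‖ < 1) :
    (∑' n : ℤ, Complex.exp (2 * Real.pi * Complex.I * (n : ℂ) * z) * q ^ (n^2))
      = ∏' n : ℕ, ((1 - q ^ (2 * (n + 1)))
          * (1 + Complex.exp (2 * Real.pi * Complex.I * z) * q ^ (2 * n + 1))
          * (1 + Complex.exp (-(2 * Real.pi * Complex.I * z)) * q ^ (2 * n + 1))) := by
  set x : ℂ := Complex.exp (2 * Real.pi * Complex.I * z) with hxdef
  have hx : x ≠ 0 := Complex.exp_ne_zero _
  have hxinv : Complex.exp (-(2 * Real.pi * Complex.I * z)) = x⁻¹ := by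
    rw [Complex.exp_neg]
  have hLHS : ∀ n : ℤ, Complex.exp (2 * Real.pi * Complex.I * (n : ℂ) * z) = x ^ n := by
    intro n
    rw [hxdef, ← Complex.exp_int_mul]
    ring_nf
  simp only [hxinv, hLHS]
  set t : ℂ := q^2 with htdef
  have ht : ‖t‖ < 1 := by
    rw [htdef, norm_pow]
    exact pow_lt_one₀ (norm_nonneg q) hq (by omega)
  set f : ℕ → ℂ := fun n => (1 - q ^ (2 * (n + 1)))
      * (1 + x * q ^ (2 * n + 1)) * (1 + x⁻¹ * q ^ (2 * n + 1)) with hfdef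
  have hq2 : ∀ n : ℕ, q ^ (2 * (n+1)) = t^(n+1) := by
    intro n; rw [htdef, ← pow_mul]
  have hq1 : ∀ n : ℕ, q ^ (2 * n + 1) = q * t^n := by
    intro n; rw [htdef, ← pow_mul, pow_succ, mul_comm]
  -- the RHS product converges
  obtain ⟨P, hP⟩ : ∃ P : ℂ, HasProd f P := by
    by_cases h0 : ∃ j, f j = 0
    · obtain ⟨j, hj⟩ := h0
      exact ⟨0, hasProd_zero_of_factor_zero hj⟩
    · push_neg at h0
      have hA : HasProd (fun n : ℕ => 1 + (-t) * t^n) _ :=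
        hasProd_aux (-t) t ht (fun n => by
          have := one_sub_pow_ne ht n
          rw [pow_succ'] at this
          intro hcon; exact this (by linear_combination hcon))
      have hBne : ∀ n : ℕ, 1 + (x*q) * t^n ≠ 0 := by
        intro n
        have := h0 n
        rw [hfdef] at this
        simp only [mul_ne_zero_iff] at this
        have h2 := this.1.2
        rw [hq1 n] at h2
        intro hcon; exact h2 (by linear_combination hcon)
      have hCne : ∀ n : ℕ, 1 + (x⁻¹*q) * t^n ≠ 0 := by
        intro n
        have := h0 n
        rw [hfdef] at this
        simp only [mul_ne_zero_iff] at this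
        have h2 := this.2
        rw [hq1 n] at h2
        intro hcon; exact h2 (by linear_combination hcon)
      have hB := hasProd_aux (x*q) t ht hBne
      have hC := hasProd_aux (x⁻¹*q) t ht hCne
      refine ⟨_, ((hA.mul hB).mul hC).congr_fun (fun n => ?_)⟩
      show (1 - q ^ (2 * (n + 1))) * (1 + x * q ^ (2 * n + 1)) * (1 + x⁻¹ * q ^ (2 * n + 1)) = _
      rw [hq2, hq1]
      ring
  rw [hP.tprod_eq]
  -- partial products
  have hpartial : Tendsto (fun N => ∏ j ∈ range N, f j) atTop (𝓝 P) :=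
    hP.tendsto_prod_nat
  -- now the q = 0 case
  by_cases hq0 : q = 0
  · have hf1 : f = fun _ => (1:ℂ) := by
      rw [hfdef]
      funext n
      rw [hq0]
      rw [zero_pow (by omega : 2*(n+1) ≠ 0), zero_pow (by omega : 2*n+1 ≠ 0)]
      ring
    have hP1 : P = 1 := hP.unique (hf1 ▸ hasProd_one)
    rw [hP1, hq0]
    rw [tsum_eq_single (0 : ℤ) ?_]
    · norm_num
    · intro n hn
      rw [zero_zpow _ (pow_ne_zero 2 hn), mul_zero]
  -- main case
  obtain ⟨L, Cp, Ci, hL0, hLtend, hCp, hCi⟩ := PP_facts ht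
  -- the coefficient family
  set F : ℕ → ℤ → ℂ := fun N n =>
    if n.natAbs ≤ N then gg t (2*N) ((n+N).toNat) * PP t N * x^n
      * q^((N:ℤ)^2 + (1-2*(N:ℤ))*(n+(N:ℤ))) else 0 with hFdef
  -- D-form of F
  have hDform : ∀ (N : ℕ) (n : ℤ), n.natAbs ≤ N →
      F N n = (PP t (2*N) * PP t N * ((PP t (2*N - (n+N).toNat)) * PP t ((n+N).toNat))⁻¹)
        * (x^n * q^(n^2)) := by
    intro N n hn
    set k := (n+N).toNat with hkdef
    have hk2N : k ≤ 2*N := by omega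
    have hkcast : (k:ℤ) = n + N := by omega
    have hne1 : PP t (2*N - k) ≠ 0 := PP_ne_zero ht _
    have hne2 : PP t k ≠ 0 := PP_ne_zero ht _
    have hgg : gg t (2*N) k = t^(k.choose 2) * PP t (2*N) * ((PP t (2*N-k)) * PP t k)⁻¹ := by
      have h := gg_closed t (2*N) k hk2N
      field_simp
      linear_combination h
    have hpow : (t:ℂ)^(k.choose 2) * q^((N:ℤ)^2 + (1-2*(N:ℤ))*(n+(N:ℤ))) = q^(n^2) := by
      rw [htdef, ← pow_mul, ← zpow_natCast q (2*(k.choose 2)), ← zpow_add₀ hq0]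
      congr 1
      have h2 : ((2*(k.choose 2) : ℕ) : ℤ) = (k:ℤ)*((k:ℤ)-1) := by
        push_cast [← two_choose_two k]
        ring
      rw [h2, hkcast]
      ring
    rw [hFdef]
    simp only [if_pos hn]
    rw [hgg, ← hpow]
    ring
  -- claim 1 : tsum F N = partial product
  have hclaim1 : ∀ N : ℕ, ∑' n : ℤ, F N n = ∏ j ∈ range N, f j := by
    intro N
    -- (a) reduce the tsum to a finite sum over Icc
    have hsupp : ∀ n ∉ Finset.Icc (-(N:ℤ)) (N:ℤ), F N n = 0 := by
      intro n hn
      rw [Finset.mem_Icc] at hn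
      rw [hFdef]
      exact if_neg (by omega)
    rw [tsum_eq_sum hsupp]
    -- (b) reindex to a sum over range (2N+1)
    have hreindex : ∑ n ∈ Finset.Icc (-(N:ℤ)) (N:ℤ), F N n
        = ∑ k ∈ range (2*N+1), (gg t (2*N) k * PP t N * x^((k:ℤ)-(N:ℤ))
            * q^((N:ℤ)^2+(1-2*(N:ℤ))*(k:ℤ))) := by
      refine Finset.sum_nbij' (fun n => (n+N).toNat) (fun k => (k:ℤ)-(N:ℤ))
        ?_ ?_ ?_ ?_ ?_
      · intro n hn
        simp only [Finset.mem_Icc] at hn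
        simp only [Finset.mem_range]
        omega
      · intro k hk
        simp only [Finset.mem_range] at hk
        simp only [Finset.mem_Icc]
        omega
      · intro n hn
        simp only [Finset.mem_Icc] at hn
        omega
      · intro k hk
        simp only [Finset.mem_range] at hk
        omega
      · intro n hn
        simp only [Finset.mem_Icc] at hn
        simp only [hFdef]
        rw [if_pos (by omega : n.natAbs ≤ N)]
        have hc : (((n+N).toNat : ℤ)) = n + N := by omega
        rw [hc]
        have hc2 : n + (N:ℤ) - (N:ℤ) = n := by ring
        rw [hc2]
    rw [hreindex]
    -- (c) the finite Jacobi identity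
    set y : ℂ := x * q^(1-2*(N:ℤ)) with hydef
    have hy : ∀ j : ℕ, 1 + y * t^j = 1 + x * q^(2*(j:ℤ)+1-2*(N:ℤ)) := by
      intro j
      have h1 : (t:ℂ)^j = q^((2*j : ℕ) : ℤ) := by
        rw [htdef, ← pow_mul, zpow_natCast]
      rw [hydef, h1, mul_assoc, ← zpow_add₀ hq0,
        show (1-2*(N:ℤ)) + ((2*j:ℕ):ℤ) = 2*(j:ℤ)+1-2*(N:ℤ) from by push_cast; ring]
    have hcastpow : ∀ j : ℕ, (q:ℂ)^(2*j+1) = q^(2*(j:ℤ)+1) := by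
      intro j
      rw [← zpow_natCast q (2*j+1),
        show ((2*j+1:ℕ):ℤ) = 2*(j:ℤ)+1 from by push_cast; ring]
    have hneg : ∀ j : ℕ, 1 + x * q^(-(2*(j:ℤ)+1))
        = (x * q^(-(2*(j:ℤ)+1))) * (1 + x⁻¹ * q^(2*j+1)) := by
      intro j
      rw [mul_add, mul_one, hcastpow j]
      have h1 : x * q ^ (-(2 * (j:ℤ) + 1)) * (x⁻¹ * q ^ (2 * (j:ℤ) + 1)) = 1 := by
        rw [show x * q ^ (-(2 * (j:ℤ) + 1)) * (x⁻¹ * q ^ (2 * (j:ℤ) + 1))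
            = (x * x⁻¹) * (q ^ (-(2 * (j:ℤ) + 1)) * q ^ (2 * (j:ℤ) + 1)) from by ring,
          mul_inv_cancel₀ hx, ← zpow_add₀ hq0,
          show -(2 * (j:ℤ) + 1) + (2 * (j:ℤ) + 1) = 0 from by ring, zpow_zero, one_mul]
      rw [h1]
      exact add_comm _ _
    -- the product over range (2N)
    have hA : ∏ j ∈ range (2*N), (1 + x * q^(2*(j:ℤ)+1-2*(N:ℤ)))
        = (x^(N:ℕ) * q^(-(N:ℤ)^2) * ∏ j ∈ range N, (1 + x⁻¹ * q^(2*j+1)))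
          * ∏ j ∈ range N, (1 + x * q^(2*j+1)) := by
      rw [two_mul, prod_range_add]
      congr 1
      · -- reflected half
        rw [← prod_range_reflect]
        have hterm : ∀ j ∈ range N, (1 + x * q^(2*((N-1-j : ℕ):ℤ)+1-2*(N:ℤ)))
            = (x * q^(-(2*(j:ℤ)+1))) * (1 + x⁻¹ * q^(2*j+1)) := by
          intro j hj
          rw [Finset.mem_range] at hj
          have hc : ((N-1-j : ℕ) : ℤ) = (N:ℤ)-1-(j:ℤ) := by omega
          rw [hc]
          have he : 2*((N:ℤ)-1-(j:ℤ))+1-2*(N:ℤ) = -(2*(j:ℤ)+1) := by ring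
          rw [he, hneg j]
        rw [prod_congr rfl hterm, prod_mul_distrib, prod_mul_distrib, prod_const,
          card_range, prod_zpow_sum q hq0, sum_odd_int]
      · -- direct half
        apply prod_congr rfl
        intro j _
        have hc : 2*(((N+j) : ℕ):ℤ)+1-2*(N:ℤ) = 2*(j:ℤ)+1 := by push_cast; ring
        rw [hc, hcastpow j]
    -- gauss
    have hgauss := gauss t y (2*N)
    rw [prod_congr rfl (fun j _ => hy j)] at hgauss
    rw [hA] at hgauss
    -- the f product
    have hQsplit : ∏ j ∈ range N, f j
        = PP t N * ((∏ j ∈ range N, (1 + x⁻¹ * q^(2*j+1)))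
            * (∏ j ∈ range N, (1 + x * q^(2*j+1)))) := by
      rw [PP, ← prod_mul_distrib, ← prod_mul_distrib]
      apply prod_congr rfl
      intro j _
      rw [hfdef]
      show (1 - q ^ (2 * (j + 1))) * (1 + x * q ^ (2 * j + 1)) * (1 + x⁻¹ * q ^ (2 * j + 1)) = _
      rw [hq2 j]
      ring
    -- y^k expansion
    have hyk : ∀ k : ℕ, y^k = x^(k:ℤ) * q^((1-2*(N:ℤ))*(k:ℤ)) := by
      intro k
      rw [hydef, mul_pow, ← zpow_natCast x k, ← zpow_natCast (q^(1-2*(N:ℤ))) k, ← zpow_mul]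
    -- finish
    have hxN : (x:ℂ)^(N:ℕ) = x^((N:ℕ):ℤ) := (zpow_natCast x N).symm
    calc ∑ k ∈ range (2*N+1), (gg t (2*N) k * PP t N * x^((k:ℤ)-(N:ℤ))
            * q^((N:ℤ)^2+(1-2*(N:ℤ))*(k:ℤ)))
        = PP t N * (x^(-(N:ℤ)) * q^((N:ℤ)^2))
            * ∑ k ∈ range (2*N+1), gg t (2*N) k * y^k := by
          rw [Finset.mul_sum]
          apply Finset.sum_congr rfl
          intro k _
          rw [hyk k]
          rw [show (k:ℤ)-(N:ℤ) = (k:ℤ) + (-(N:ℤ)) by ring, zpow_add₀ hx,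
            zpow_add₀ hq0]
          ring
      _ = PP t N * (x^(-(N:ℤ)) * q^((N:ℤ)^2))
            * ((x^(N:ℕ) * q^(-(N:ℤ)^2) * ∏ j ∈ range N, (1 + x⁻¹ * q^(2*j+1)))
              * ∏ j ∈ range N, (1 + x * q^(2*j+1))) := by rw [← hgauss]
      _ = (x^(-(N:ℤ)) * x^((N:ℕ):ℤ)) * (q^((N:ℤ)^2) * q^(-(N:ℤ)^2))
            * (PP t N * ((∏ j ∈ range N, (1 + x⁻¹ * q^(2*j+1)))
              * ∏ j ∈ range N, (1 + x * q^(2*j+1)))) := by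
          rw [hxN]; ring
      _ = PP t N * ((∏ j ∈ range N, (1 + x⁻¹ * q^(2*j+1)))
              * ∏ j ∈ range N, (1 + x * q^(2*j+1))) := by
          rw [← zpow_add₀ hx, ← zpow_add₀ hq0]
          norm_num
      _ = ∏ j ∈ range N, f j := hQsplit.symm
  -- pointwise limits
  have hab : ∀ n : ℤ, Tendsto (fun N => F N n) atTop (𝓝 (x^n * q^(n^2))) := by
    intro n
    have t1 : Tendsto (fun N : ℕ => PP t (2*N)) atTop (𝓝 L) :=
      hLtend.comp (tendsto_atTop_mono (fun N => by simp only [id_eq]; omega) tendsto_id)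
    have t3 : Tendsto (fun N : ℕ => PP t (2*N - (n+N).toNat)) atTop (𝓝 L) :=
      hLtend.comp (tendsto_atTop_mono
        (fun N => (by omega : N - n.natAbs ≤ 2*N - (n+N).toNat))
        (tendsto_sub_atTop_nat n.natAbs))
    have t4 : Tendsto (fun N : ℕ => PP t ((n+N).toNat)) atTop (𝓝 L) :=
      hLtend.comp (tendsto_atTop_mono
        (fun N => (by omega : N - n.natAbs ≤ (n+N).toNat))
        (tendsto_sub_atTop_nat n.natAbs))
    have hDlim := ((t1.mul hLtend).mul ((t3.mul t4).inv₀ (mul_ne_zero hL0 hL0)))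
    rw [mul_inv_cancel₀ (mul_ne_zero hL0 hL0)] at hDlim
    have hDlim' := hDlim.mul_const (x^n * q^(n^2))
    rw [one_mul] at hDlim'
    apply hDlim'.congr'
    filter_upwards [eventually_ge_atTop n.natAbs] with N hN
    exact (hDform N n hN).symm
  -- bound
  set bound : ℤ → ℝ := fun n =>
    (Cp * Cp * (Ci * Ci)) * (‖q‖^(n.natAbs^2) * (max ‖x‖ ‖x⁻¹‖)^(n.natAbs)) with hbdef
  have hCp0 : (0:ℝ) ≤ Cp := le_trans (norm_nonneg _) (hCp 0)
  have hCi0 : (0:ℝ) ≤ Ci := le_trans (norm_nonneg _) (hCi 0)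
  have hnormq : ∀ n : ℤ, ‖q^(n^2)‖ = ‖q‖^(n.natAbs^2) := by
    intro n
    have e : ((n.natAbs^2 : ℕ) : ℤ) = n^2 := by
      rw [Nat.cast_pow]; exact Int.natAbs_sq n
    rw [← e, zpow_natCast, norm_pow]
  have hnormx : ∀ n : ℤ, ‖x^n‖ ≤ (max ‖x‖ ‖x⁻¹‖)^(n.natAbs) := by
    intro n
    rcases Int.natAbs_eq n with h | h
    · rw [h]
      simp only [Int.natAbs_natCast, zpow_natCast, norm_pow]
      exact pow_le_pow_left₀ (norm_nonneg x) (le_max_left _ _) _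
    · rw [h]
      simp only [Int.natAbs_neg, Int.natAbs_natCast, zpow_neg, zpow_natCast, ← inv_pow,
        norm_pow]
      exact pow_le_pow_left₀ (norm_nonneg _) (le_max_right _ _) _
  have h_bound : ∀ (N : ℕ) (n : ℤ), ‖F N n‖ ≤ bound n := by
    intro N n
    have hb0 : (0:ℝ) ≤ ‖q‖^(n.natAbs^2) * (max ‖x‖ ‖x⁻¹‖)^(n.natAbs) := by positivity
    by_cases hn : n.natAbs ≤ N
    · rw [hDform N n hn, hbdef, norm_mul]
      have hD : ‖PP t (2*N) * PP t N * ((PP t (2*N - (n+N).toNat)) * PP t ((n+N).toNat))⁻¹‖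
          ≤ Cp * Cp * (Ci * Ci) := by
        rw [mul_inv, norm_mul, norm_mul, norm_mul]
        have g1 := hCp (2*N)
        have g2 := hCp N
        have g3 := hCi (2*N - (n+N).toNat)
        have g4 := hCi ((n+N).toNat)
        have : (0:ℝ) ≤ ‖PP t N‖ := norm_nonneg _
        gcongr
      have hx2 : ‖x^n * q^(n^2)‖ ≤ ‖q‖^(n.natAbs^2) * (max ‖x‖ ‖x⁻¹‖)^(n.natAbs) := by
        rw [norm_mul, mul_comm (‖x^n‖)]
        rw [hnormq n]
        exact mul_le_mul_of_nonneg_left (hnormx n) (by positivity)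
      exact mul_le_mul hD hx2 (norm_nonneg _) (by positivity)
    · rw [hFdef]
      simp only [if_neg hn, norm_zero, hbdef]
      exact mul_nonneg (by positivity) hb0
  have h_sum : Summable bound := by
    rw [hbdef]
    apply Summable.mul_left
    set r := max ‖x‖ ‖x⁻¹‖ with hrdef
    have hr0 : (0:ℝ) ≤ r := le_trans (norm_nonneg x) (le_max_left _ _)
    set g : ℕ → ℝ := fun m => ‖q‖^(m^2) * r^m with hgdef
    have hgsum : Summable g := by
      apply summable_of_ratio_norm_eventually_le (show (1:ℝ)/2 < 1 by norm_num)
      have hto : Tendsto (fun m : ℕ => ‖q‖^(2*m+1) * r) atTop (𝓝 0) := by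
        have h1 : Tendsto (fun m : ℕ => (‖q‖^2)^m * (‖q‖*r)) atTop (𝓝 (0 * (‖q‖*r))) :=
          (tendsto_pow_atTop_nhds_zero_of_lt_one (by positivity)
            (by nlinarith [norm_nonneg q])).mul_const _
        rw [zero_mul] at h1
        apply h1.congr
        intro m
        ring
      filter_upwards [hto.eventually_le_const (by norm_num : (0:ℝ) < 1/2)] with m hm
      have hg0 : (0:ℝ) ≤ g m := by rw [hgdef]; positivity
      have hgs : g (m+1) = g m * (‖q‖^(2*m+1) * r) := by
        rw [hgdef]
        show ‖q‖^((m+1)^2) * r^(m+1) = _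
        rw [show (m+1)^2 = m^2 + (2*m+1) by ring, pow_add]
        ring
      rw [Real.norm_of_nonneg (by rw [hgdef]; positivity),
        Real.norm_of_nonneg hg0, hgs]
      calc g m * (‖q‖^(2*m+1) * r) ≤ g m * (1/2) :=
            mul_le_mul_of_nonneg_left hm hg0
        _ = 1/2 * g m := by ring
    have : (fun n : ℤ => ‖q‖^(n.natAbs^2) * r^(n.natAbs)) = fun n : ℤ => g n.natAbs := rfl
    rw [this]
    exact Summable.of_nat_of_neg (by simpa using hgsum) (by simpa using hgsum)
  have hconv : Tendsto (fun N => ∑' n : ℤ, F N n) atTop (𝓝 (∑' n : ℤ, x^n * q^(n^2))) :=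
    tendsto_tsum_of_dominated_convergence h_sum hab (Eventually.of_forall h_bound)
  rw [funext hclaim1] at hconv
  exact tendsto_nhds_unique hconv hpartial
end

section
/- Among all w ∈ ℂ, the formal Dirichlet series D̃_w(s) = 1 + Σ_{m≥2} (c_m(w)/(2w)) m^{-s} (with the convention c_m(w)/(2w) evaluated as a polynomial at w=0) satisfies the multiplicativity condition c̃_2(w)·c̃_3(w) = c̃_6(w) only for w ∈ {0, 1, 2, 4, 8}; i.e., the polynomial c̃_2(w)c̃_3(w) - c̃_6(w) ∈ ℚ[w] has degree 5 with root set exactly {0, 1, 2, 4, 8}. -/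
/-- The "binomial coefficient" polynomial `C(w, j) = w(w-1)⋯(w-j+1)/j!` in `ℚ[w]`. -/
noncomputable def binomPoly (j : ℕ) : Polynomial ℚ :=
  Polynomial.C ((j.factorial : ℚ)⁻¹) * ∏ i ∈ Finset.range j, (Polynomial.X - Polynomial.C (i : ℚ))

/-- `repCount j m` is the number of `j`-tuples of positive integers whose squares sum to `m`. -/
def repCount (j m : ℕ) : ℕ :=
  (Finset.univ.filter (fun f : Fin j → Fin (m + 1) =>
    (∀ i, 1 ≤ (f i).1) ∧ ∑ i, ((f i).1)^2 = m)).card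

/-- `thetaCoeff m = c_m(w)`, the `m`-th Fourier coefficient of `θ^w`, defined via the
binomial expansion `ϑ(q)^w = 1 + ∑_{j≥1} C(w,j) 2^j (∑_{n≥1} q^{n²})^j`. -/
noncomputable def thetaCoeff (m : ℕ) : Polynomial ℚ :=
  ∑ j ∈ Finset.Icc 1 m, ((2:ℚ)^j * (repCount j m : ℚ)) • binomPoly j

/-- `c̃_m(w) = c_m(w)/(2w)` as a polynomial (using that `c_m(0) = 0`, i.e. `w ∣ c_m`). -/
noncomputable def thetaCoeffTilde (m : ℕ) : Polynomial ℚ :=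
  Polynomial.C (1/2 : ℚ) * (thetaCoeff m /ₘ Polynomial.X)

/-!
Expanding `ϑ^w = (1 + 2∑ q^{n²})^w` binomially, `c_m(w) = ∑_j 2^j r_j(m) C(w, j)` where `r_j(m)`
counts representations of `m` as a sum of `j` positive squares. For `m ≤ 6` almost all these
counts are forced: `j` positive squares sum to `j` when all are `1`, and to at least `j + 3`
otherwise. Only `r_1(6) = r_2(6) = 0` and `r_3(6) = 3` need counting, which gives
`c̃_2 = w - 1`, `c̃_3 = (2/3)(w-1)(w-2)`, `c̃_6 = 2(w-1)(w-2) + (2/45)(w-1)⋯(w-5)`, and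
`c̃_2 c̃_3 - c̃_6 = -(2/45) w(w-1)(w-2)(w-4)(w-8)`.
-/

open Polynomial Finset

theorem add_three_le_sum_sq {ι : Type*} [Fintype ι] (f : ι → ℕ) (hf : ∀ i, 1 ≤ f i) {i₀ : ι}
    (hi₀ : 2 ≤ f i₀) : Fintype.card ι + 3 ≤ ∑ i, f i ^ 2 := by
  classical
  have hsplit := add_sum_erase univ (fun i => f i ^ 2) (mem_univ i₀)
  have hrest : (univ.erase i₀).card ≤ ∑ i ∈ univ.erase i₀, f i ^ 2 :=
    card_eq_sum_ones (univ.erase i₀) ▸ sum_le_sum fun i _ => Nat.one_le_pow _ _ (hf i)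
  have hcard : (univ.erase i₀).card + 1 = Fintype.card ι := card_erase_add_one (mem_univ i₀)
  nlinarith

theorem eq_one_of_sum_sq_lt {ι : Type*} [Fintype ι] (f : ι → ℕ) (hf : ∀ i, 1 ≤ f i)
    (hsum : ∑ i, f i ^ 2 < Fintype.card ι + 3) (i : ι) : f i = 1 := by
  by_contra hi
  exact (add_three_le_sum_sq f hf (i₀ := i) (by have := hf i; omega)).not_gt hsum

theorem repCount_self (j : ℕ) : repCount j j = 1 := by
  rw [repCount, card_eq_one]
  refine ⟨fun i => ⟨1, by have := i.2; omega⟩, eq_singleton_iff_unique_mem.2 ⟨by simp, ?_⟩⟩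
  intro f hf
  simp only [mem_filter, mem_univ, true_and] at hf
  funext i
  exact Fin.ext <| eq_one_of_sum_sq_lt (fun i => (f i).1) hf.1 (by simp [hf.2]) i

theorem repCount_eq_zero_of_lt_of_lt_add_three {j m : ℕ} (hjm : j < m) (hmj : m < j + 3) :
    repCount j m = 0 := by
  rw [repCount, card_eq_zero, filter_eq_empty_iff]
  rintro f - ⟨hf, hsum⟩
  have hone := eq_one_of_sum_sq_lt (fun i => (f i).1) hf (by simp [hsum, hmj])
  simp only [hone, one_pow, sum_const, card_univ, Fintype.card_fin, smul_eq_mul, mul_one] at hsum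
  omega

theorem repCount_one_six : repCount 1 6 = 0 := by decide

theorem repCount_two_six : repCount 2 6 = 0 := by decide

theorem repCount_three_six : repCount 3 6 = 3 := by decide

theorem thetaCoeff_two : thetaCoeff 2 = (4 : ℚ) • binomPoly 2 := by
  norm_num [thetaCoeff, sum_Icc_succ_top, repCount_self, repCount_eq_zero_of_lt_of_lt_add_three]

theorem thetaCoeff_three : thetaCoeff 3 = (8 : ℚ) • binomPoly 3 := by
  norm_num [thetaCoeff, sum_Icc_succ_top, repCount_self, repCount_eq_zero_of_lt_of_lt_add_three]

theorem thetaCoeff_six : thetaCoeff 6 = (24 : ℚ) • binomPoly 3 + (64 : ℚ) • binomPoly 6 := by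
  norm_num [thetaCoeff, sum_Icc_succ_top, repCount_self, repCount_eq_zero_of_lt_of_lt_add_three,
    repCount_one_six, repCount_two_six, repCount_three_six]

theorem thetaCoeffTilde_eq_of_thetaCoeff_eq {m : ℕ} {p : ℚ[X]} (h : thetaCoeff m = 2 * X * p) :
    thetaCoeffTilde m = p := by
  rw [thetaCoeffTilde, h, mul_comm 2 X, mul_assoc, mul_divByMonic_cancel_left _ monic_X,
    ← mul_assoc, ← C_ofNat, ← C_mul]
  norm_num

theorem eval_binomPoly (j : ℕ) (x : ℚ) :
    (binomPoly j).eval x = (∏ i ∈ range j, (x - i)) / j.factorial := by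
  simp [binomPoly, eval_prod, div_eq_inv_mul]

theorem thetaCoeffTilde_two : thetaCoeffTilde 2 = X - 1 := by
  refine thetaCoeffTilde_eq_of_thetaCoeff_eq (Polynomial.funext fun x => ?_)
  simp only [thetaCoeff_two, eval_smul, eval_binomPoly, smul_eq_mul, prod_range_succ,
    prod_range_zero, Nat.factorial, eval_mul, eval_sub, eval_X, eval_one, eval_ofNat]
  push_cast
  ring

theorem thetaCoeffTilde_three : thetaCoeffTilde 3 = C (2 / 3) * (X - 1) * (X - 2) := by
  refine thetaCoeffTilde_eq_of_thetaCoeff_eq (Polynomial.funext fun x => ?_)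
  simp only [thetaCoeff_three, eval_smul, eval_binomPoly, smul_eq_mul, prod_range_succ,
    prod_range_zero, Nat.factorial, eval_mul, eval_sub, eval_X, eval_C, eval_one, eval_ofNat]
  push_cast
  ring

theorem thetaCoeffTilde_six : thetaCoeffTilde 6 =
    C 2 * (X - 1) * (X - 2) + C (2 / 45) * (X - 1) * (X - 2) * (X - 3) * (X - 4) * (X - 5) := by
  refine thetaCoeffTilde_eq_of_thetaCoeff_eq (Polynomial.funext fun x => ?_)
  simp only [thetaCoeff_six, eval_add, eval_smul, eval_binomPoly, smul_eq_mul, prod_range_succ,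
    prod_range_zero, Nat.factorial, eval_mul, eval_sub, eval_X, eval_C, eval_one, eval_ofNat]
  push_cast
  ring

theorem thetaCoeffTilde_two_mul_three_sub_six :
    thetaCoeffTilde 2 * thetaCoeffTilde 3 - thetaCoeffTilde 6 =
      C (-2 / 45) * (X * (X - 1) * (X - 2) * (X - 4) * (X - 8)) := by
  rw [thetaCoeffTilde_two, thetaCoeffTilde_three, thetaCoeffTilde_six]
  refine Polynomial.funext fun x => ?_
  simp only [eval_sub, eval_mul, eval_add, eval_X, eval_C, eval_one, eval_ofNat]
  ring

/-- the polynomial `c̃_2(w)c̃_3(w) - c̃_6(w)` has degree `5` and its roots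
are exactly `{0, 1, 2, 4, 8}`; so the Euler product condition holds only for these `w`. -/
theorem euler_product_values :
    (thetaCoeffTilde 2 * thetaCoeffTilde 3 - thetaCoeffTilde 6).degree = 5 ∧
    ∀ x : ℚ, (thetaCoeffTilde 2 * thetaCoeffTilde 3 - thetaCoeffTilde 6).eval x = 0 ↔
      (x = 0 ∨ x = 1 ∨ x = 2 ∨ x = 4 ∨ x = 8) := by
  rw [thetaCoeffTilde_two_mul_three_sub_six]
  exact ⟨by compute_degree!, fun x => by simp [sub_eq_zero, or_assoc]⟩
end

section
/- The function f(r) = θ(1)·e^{r/2}/θ(e^{-2r}) on ℝ satisfies f(r) = θ(1)/√(θ(e^{2r})θ(e^{-2r})) = θ(1)·e^{-r/2}/θ(e^{2r}); in particular f is even, f(0) = 1, and 0 < f(r) ≤ 1 for all r ∈ ℝ. -/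
/-- `f(r) = θ(1) e^{r/2} / θ(e^{-2r})`. -/
noncomputable def fchar (r : ℝ) : ℝ := theta 1 * Real.exp (r/2) / theta (Real.exp (-2 * r))

open Real

namespace ThetaPf

lemma summable_pow {t : ℝ} (ht : 0 < t) (k : ℕ) :
    Summable (fun n : ℤ => |(n:ℝ)|^k * Real.exp (-π * (n:ℝ)^2 * t)) := by
  refine (summable_pow_mul_jacobiTheta₂_term_bound 0 ht k).congr fun n => ?_
  push_cast
  congr 2
  ring

lemma summable_theta {t : ℝ} (ht : 0 < t) :
    Summable (fun n : ℤ => Real.exp (-π * (n:ℝ)^2 * t)) := by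
  simpa using summable_pow ht 0

lemma one_le_theta {t : ℝ} (ht : 0 < t) : 1 ≤ theta t := by
  have h0 : Real.exp (-π * ((0:ℤ):ℝ)^2 * t) = 1 := by norm_num
  calc (1:ℝ) = Real.exp (-π * ((0:ℤ):ℝ)^2 * t) := h0.symm
  _ ≤ theta t := Summable.le_tsum (summable_theta ht) 0 (fun j _ => (Real.exp_pos _).le)

lemma theta_pos {t : ℝ} (ht : 0 < t) : 0 < theta t :=
  lt_of_lt_of_le one_pos (one_le_theta ht)

lemma theta_inv {t : ℝ} (ht : 0 < t) : theta t⁻¹ = Real.sqrt t * theta t := by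
  have h := Real.tsum_exp_neg_mul_int_sq (a := t⁻¹) (inv_pos.mpr ht)
  have e1 : (fun n : ℤ => Real.exp (-π * t⁻¹ * (n:ℝ)^2)) =
      fun n : ℤ => Real.exp (-π * (n:ℝ)^2 * t⁻¹) := by funext n; congr 1; ring
  have e2 : (fun n : ℤ => Real.exp (-π / t⁻¹ * (n:ℝ)^2)) =
      fun n : ℤ => Real.exp (-π * (n:ℝ)^2 * t) := by
    funext n; congr 1; field_simp
  rw [e1, e2] at h
  have e3 : (1:ℝ) / (t⁻¹) ^ ((1:ℝ)/2) = Real.sqrt t := by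
    rw [← Real.sqrt_eq_rpow, Real.sqrt_inv, one_div, inv_inv]
  rw [theta, theta, h, e3]

noncomputable def q : ℝ := Real.exp (-π)

noncomputable def V (j : ℕ) (n : ℤ) : ℝ := ((n:ℝ)^2)^j * Real.exp (-π * (n:ℝ)^2)

noncomputable def S (j : ℕ) : ℝ := ∑' n : ℤ, V j n

lemma V_nonneg (j : ℕ) (n : ℤ) : 0 ≤ V j n := by
  unfold V; positivity

lemma summable_V (j : ℕ) : Summable (V j) := by
  refine (summable_pow one_pos (2*j)).congr fun n => ?_
  unfold V
  rw [pow_mul, sq_abs, mul_one]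

lemma q_pos : 0 < q := Real.exp_pos _

lemma exp_one_cubed : Real.exp 3 = Real.exp 1 * Real.exp 1 * Real.exp 1 := by
  rw [← Real.exp_add, ← Real.exp_add]; norm_num

lemma q_lt : q < 1/20 := by
  have h1 : q < Real.exp (-3) := Real.exp_lt_exp.mpr (by linarith [Real.pi_gt_three])
  have h2 : (20:ℝ) < Real.exp 3 := by
    have := Real.exp_one_gt_d9
    rw [exp_one_cubed]; nlinarith [Real.exp_pos 1]
  have h3 : Real.exp (-3) < 1/20 := by
    rw [Real.exp_neg]
    rw [inv_lt_comm₀ (Real.exp_pos 3) (by norm_num)] at *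
    · linarith
  linarith

lemma q_gt : 1/24 < q := by
  have h15 : Real.exp (0.15) ≤ 20/17 := by
    have h := Real.add_one_le_exp (-0.15)
    have h2 : Real.exp 0.15 = (Real.exp (-0.15))⁻¹ := by
      rw [← Real.exp_neg]; norm_num
    rw [h2]
    rw [inv_le_comm₀ (Real.exp_pos _) (by norm_num)]
    linarith
  have h3 : Real.exp 3 ≤ 20.086 := by
    have h := Real.exp_one_lt_d9
    have hp : (0:ℝ) < Real.exp 1 := Real.exp_pos 1
    have h1 : Real.exp 1 ≤ 2.7182818286 := le_of_lt h
    rw [exp_one_cubed]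
    nlinarith [mul_pos hp hp]
  have hpi : Real.exp π < Real.exp 3.15 := Real.exp_lt_exp.mpr Real.pi_lt_d2
  have h315 : Real.exp (3.15 : ℝ) = Real.exp 3 * Real.exp 0.15 := by
    rw [← Real.exp_add]; norm_num
  have h24 : Real.exp π < 24 := by
    rw [h315] at hpi
    nlinarith [Real.exp_pos (0.15:ℝ), Real.exp_pos (3:ℝ)]
  have : q = (Real.exp π)⁻¹ := by rw [q, Real.exp_neg]
  rw [this]
  rw [lt_inv_comm₀ (by norm_num) (Real.exp_pos _)]
  linarith

lemma summable_V_nat (j : ℕ) : Summable (fun n : ℕ => V j (n : ℤ)) :=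
  (summable_V j).comp_injective (fun a b h => by exact_mod_cast h)

lemma summable_V_shift (j : ℕ) (k : ℕ) : Summable (fun n : ℕ => V j ((n : ℤ) + k)) := by
  have h := (summable_nat_add_iff k).mpr (summable_V_nat j)
  refine h.congr fun n => ?_
  push_cast
  ring_nf

lemma summable_V_shift1 (j : ℕ) : Summable (fun n : ℕ => V j ((n : ℤ) + 1)) :=
  (summable_V_shift j 1).congr fun n => by norm_num

lemma summable_V_shift2 (j : ℕ) : Summable (fun n : ℕ => V j ((n : ℤ) + 2)) :=
  (summable_V_shift j 2).congr fun n => by norm_num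

lemma V_even (j : ℕ) (n : ℤ) : V j (-n) = V j n := by
  unfold V; push_cast; ring_nf

lemma S_eq (j : ℕ) : S j = V j 0 + 2 * ∑' n : ℕ, V j ((n:ℤ) + 1) := by
  have hnat := summable_V_nat j
  have hneg : Summable (fun n : ℕ => V j (-((n:ℤ) + 1))) := by
    refine (summable_V_shift1 j).congr fun n => ?_
    rw [V_even]
  have h := tsum_of_nat_of_neg_add_one hnat hneg
  have h2 : ∑' n : ℕ, V j ((n:ℤ)) = V j 0 + ∑' n : ℕ, V j ((n:ℤ) + 1) := by
    rw [Summable.tsum_eq_zero_add hnat]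
    norm_num
  have h3 : ∑' n : ℕ, V j (-((n:ℤ) + 1)) = ∑' n : ℕ, V j ((n:ℤ) + 1) := by
    exact tsum_congr fun n => V_even j _
  rw [S, h, h2, h3]
  ring

lemma V_one (j : ℕ) : V j 1 = q := by
  simp [V, q]

lemma S_lower (j : ℕ) : V j 0 + 2 * q ≤ S j := by
  rw [S_eq j]
  have h : q ≤ ∑' n : ℕ, V j ((n:ℤ) + 1) := by
    have := Summable.le_tsum (summable_V_shift1 j) 0 (fun k _ => V_nonneg j _)
    simpa [V_one] using this
  linarith

lemma tail_bound (j : ℕ) (hj : j ≤ 3) : ∑' n : ℕ, V j ((n:ℤ) + 2) ≤ 0.0005 := by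
  have hq0 := q_pos
  have hq1 := q_lt
  have hterm : ∀ n : ℕ, V j ((n:ℤ) + 2) ≤ (64 * q^4) * (64 * q^2)^n := by
    intro n
    have hcast : (((n:ℤ) + 2 : ℤ) : ℝ) = ((n + 2 : ℕ) : ℝ) := by push_cast; ring
    unfold V
    rw [hcast]
    have hA : Real.exp (-π * ((n + 2 : ℕ):ℝ)^2) = q ^ ((n+2)^2) := by
      rw [q, ← Real.exp_nat_mul]
      congr 1
      push_cast
      ring
    have hA2 : q ^ ((n+2)^2) ≤ q ^ (2*n + 4) := by
      apply pow_le_pow_of_le_one hq0.le (by linarith)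
      nlinarith
    have hB : (((n + 2 : ℕ):ℝ)^2)^j ≤ 64 * 64^n := by
      have h1 : ((n + 2 : ℕ):ℝ) ≤ 2^(n+1) := by
        exact_mod_cast Nat.succ_le_of_lt (Nat.lt_two_pow_self (n := n+1))
      have h1' : (1:ℝ) ≤ ((n + 2 : ℕ):ℝ)^2 := by
        have h0 : (1:ℝ) ≤ ((n + 2 : ℕ):ℝ) := by exact_mod_cast Nat.le_add_left 1 (n+1)
        nlinarith
      have h2 : (0:ℝ) ≤ ((n + 2 : ℕ):ℝ) := by positivity
      calc (((n + 2 : ℕ):ℝ)^2)^j ≤ (((n + 2 : ℕ):ℝ)^2)^3 :=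
            pow_le_pow_right₀ h1' hj
      _ = (((n + 2 : ℕ):ℝ))^6 := by ring
      _ ≤ ((2:ℝ)^(n+1))^6 := by gcongr
      _ = 64 * 64^n := by
          rw [← pow_mul, show (n+1)*6 = 6*n + 6 by ring, pow_add,
            show (64:ℝ)^n = (2:ℝ)^(6*n) by rw [show (64:ℝ) = 2^6 by norm_num, ← pow_mul]]
          norm_num
          ring
    have hq24 : q ^ (2*n+4) = q^4 * (q^2)^n := by
      rw [← pow_mul, ← pow_add]
      congr 1
      ring
    calc (((n + 2 : ℕ):ℝ)^2)^j * Real.exp (-π * ((n + 2 : ℕ):ℝ)^2)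
        ≤ (64 * 64^n) * q ^ (2*n+4) := by
          rw [hA]
          exact mul_le_mul hB hA2 (by positivity) (by positivity)
    _ = (64 * q^4) * (64 * q^2)^n := by
          rw [hq24, mul_pow]
          ring
  have hgeo : Summable (fun n : ℕ => (64 * q^4) * (64 * q^2)^n) := by
    apply Summable.mul_left
    apply summable_geometric_of_lt_one (by positivity)
    nlinarith
  have hsum := Summable.tsum_le_tsum hterm (summable_V_shift2 j) hgeo
  rw [tsum_mul_left, tsum_geometric_of_lt_one (by positivity) (by nlinarith)] at hsum
  have h84 : (0.84:ℝ) ≤ 1 - 64 * q^2 := by nlinarith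
  have hq2 : q^2 ≤ 1/400 := by nlinarith
  have hq4 : q^4 ≤ (1/400) * q^2 := by nlinarith [sq_nonneg q, pow_pos hq0 2]
  have hfin : (64 * q^4) * (1 - 64 * q^2)⁻¹ ≤ 0.0005 := by
    rw [mul_inv_le_iff₀ (by nlinarith)]
    nlinarith
  linarith

lemma S_upper (j : ℕ) (hj : j ≤ 3) : S j ≤ V j 0 + 2 * q + 0.001 := by
  rw [S_eq j]
  have h1 : ∑' n : ℕ, V j ((n:ℤ) + 1) = q + ∑' n : ℕ, V j ((n:ℤ) + 2) := by
    rw [Summable.tsum_eq_zero_add (summable_V_shift1 j)]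
    norm_num [V_one]
    exact tsum_congr fun n => by congr 1
  have h2 := tail_bound j hj
  rw [h1]
  linarith

lemma cosh_ge_aux {t : ℝ} (ht : 0 ≤ t) : 1 + t^2/2 ≤ Real.cosh t := by
  have h2 : Real.cosh t = 1 + 2 * Real.sinh (t/2)^2 := by
    have h := Real.cosh_two_mul (t/2)
    rw [show 2*(t/2) = t by ring] at h
    rw [h, Real.cosh_sq]
    ring
  have h3 : t/2 ≤ Real.sinh (t/2) := Real.self_le_sinh_iff.mpr (by linarith)
  nlinarith

lemma cosh_ge (t : ℝ) : 1 + t^2/2 ≤ Real.cosh t := by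
  rcases le_total 0 t with h|h
  · exact cosh_ge_aux h
  · have h2 := cosh_ge_aux (neg_nonneg.mpr h)
    rw [Real.cosh_neg] at h2
    nlinarith

lemma quad_le_exp {x : ℝ} (hx : 0 ≤ x) : 1 + x + x^2/2 ≤ Real.exp x := by
  have h1 := cosh_ge x
  have h2 : x ≤ Real.sinh x := Real.self_le_sinh_iff.mpr hx
  have h3 := Real.cosh_add_sinh x
  linarith

lemma sinh_04 : Real.sinh (2/5) ≤ 8/15 := by
  rw [Real.sinh_eq]
  have h1 : (3:ℝ)/5 ≤ Real.exp (-(2/5)) := by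
    have := Real.add_one_le_exp (-(2/5):ℝ)
    linarith
  have h2 : Real.exp ((2:ℝ)/5) ≤ 5/3 := by
    have h3 : Real.exp ((2:ℝ)/5) = (Real.exp (-(2/5)))⁻¹ := by
      rw [← Real.exp_neg]; norm_num
    rw [h3]
    rw [inv_le_comm₀ (Real.exp_pos _) (by norm_num)]
    linarith
  linarith

lemma term_bound {K D c s : ℝ} (hK : 0 ≤ K) (hs : 0 ≤ s) (hc2 : c^2 = 1 + s^2) (hc1 : 1 ≤ c) :
    Real.exp (-π*K) * (1 + π^2*D^2*s^2/2 - π*K*s^2/2 - π^3*K*D^2*s^4/4)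
      ≤ (Real.exp (-π*(K*c + D*s)) + Real.exp (-π*(K*c - D*s))) / 2 := by
  have hpi := Real.pi_pos
  have hcs : c ≤ 1 + s^2/2 := by nlinarith
  have hrhs : (Real.exp (-π*(K*c + D*s)) + Real.exp (-π*(K*c - D*s))) / 2
      = Real.exp (-π*K*c) * Real.cosh (π*D*s) := by
    rw [Real.cosh_eq,
        show -π*(K*c + D*s) = -π*K*c + -(π*D*s) by ring,
        show -π*(K*c - D*s) = -π*K*c + (π*D*s) by ring,
        Real.exp_add, Real.exp_add]
    ring
  have hcosh : 1 + (π*D*s)^2/2 ≤ Real.cosh (π*D*s) := cosh_ge _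
  have hexpc : Real.exp (-π*K) * (1 - π*K*s^2/2) ≤ Real.exp (-π*K*c) := by
    have h1 : Real.exp (-π*K*c) = Real.exp (-π*K) * Real.exp (-(π*K*(c-1))) := by
      rw [← Real.exp_add]; congr 1; ring
    have h2 : 1 - π*K*(c-1) ≤ Real.exp (-(π*K*(c-1))) := by
      have := Real.add_one_le_exp (-(π*K*(c-1)))
      linarith
    have h3 : π*K*(c-1) ≤ π*K*(s^2/2) := by
      apply mul_le_mul_of_nonneg_left (by linarith) (by positivity)
    have h4 : 1 - π*K*s^2/2 ≤ Real.exp (-(π*K*(c-1))) := by nlinarith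
    rw [h1]
    exact mul_le_mul_of_nonneg_left h4 (Real.exp_pos _).le
  rw [hrhs]
  rcases le_total (1 - π*K*s^2/2) 0 with hneg|hpos
  · have hv : 0 ≤ π^2*D^2*s^2/2 := by positivity
    have h5 : (1 - π*K*s^2/2) * (π^2*D^2*s^2/2) ≤ 0 :=
      mul_nonpos_of_nonpos_of_nonneg hneg hv
    have hL : Real.exp (-π*K) * (1 + π^2*D^2*s^2/2 - π*K*s^2/2 - π^3*K*D^2*s^4/4) ≤ 0 := by
      apply mul_nonpos_of_nonneg_of_nonpos (Real.exp_pos _).le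
      nlinarith
    have hR : 0 ≤ Real.exp (-π*K*c) * Real.cosh (π*D*s) := by
      have := Real.cosh_pos (x := π*D*s)
      positivity
    linarith
  · calc Real.exp (-π*K) * (1 + π^2*D^2*s^2/2 - π*K*s^2/2 - π^3*K*D^2*s^4/4)
        = (Real.exp (-π*K) * (1 - π*K*s^2/2)) * (1 + (π*D*s)^2/2) := by ring
    _ ≤ Real.exp (-π*K*c) * Real.cosh (π*D*s) := by
        apply mul_le_mul hexpc hcosh (by positivity) (Real.exp_pos _).le

lemma summable_V_norm (j : ℕ) : Summable (fun n : ℤ => ‖V j n‖) :=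
  (summable_V j).congr fun n => (Real.norm_eq_abs _ ▸ (abs_of_nonneg (V_nonneg j n))).symm

lemma summable_W (i j : ℕ) : Summable (fun p : ℤ × ℤ => V i p.1 * V j p.2) :=
  (summable_V i).mul_of_nonneg (summable_V j) (V_nonneg i) (V_nonneg j)

lemma tsum_W (i j : ℕ) : ∑' p : ℤ × ℤ, V i p.1 * V j p.2 = S i * S j := by
  rw [S, S]
  exact (tsum_mul_tsum_of_summable_norm (summable_V_norm i) (summable_V_norm j)).symm

lemma summable_exp_norm {t : ℝ} (ht : 0 < t) :
    Summable (fun n : ℤ => ‖Real.exp (-π * (n:ℝ)^2 * t)‖) :=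
  (summable_theta ht).congr fun n =>
    (Real.norm_eq_abs _ ▸ (abs_of_nonneg (Real.exp_pos _).le)).symm

lemma theta_prod {x : ℝ} (hx : 0 < x) :
    theta x * theta x⁻¹ =
      ∑' p : ℤ × ℤ, Real.exp (-π * (p.1:ℝ)^2 * x) * Real.exp (-π * (p.2:ℝ)^2 * x⁻¹) := by
  rw [theta, theta]
  exact tsum_mul_tsum_of_summable_norm (summable_exp_norm hx) (summable_exp_norm (inv_pos.mpr hx))

lemma fq_nonneg {qq : ℝ} (hq1 : 1/24 < qq) (hq2 : qq < 1/20) :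
    0 ≤ 9.869*(2*qq*(1+2*qq) - (2*qq+0.001)*(2*qq+0.001))
      - 3.1416*((2*qq+0.001)*(1+2*qq+0.001))
      - 4.41*((2*qq+0.001)*(1+2*qq+0.001) - 2*qq*(2*qq)) := by
  nlinarith [mul_nonneg (by linarith : (0:ℝ) ≤ qq - 1/24) (by linarith : (0:ℝ) ≤ 1/20 - qq)]

lemma numeric_X {p qq s S0 S1 S2 S3 : ℝ}
    (hp1 : 3.1415 < p) (hp2 : p < 3.1416)
    (hq1 : 1/24 < qq) (hq2 : qq < 1/20)
    (hs2 : s^2 ≤ 64/225)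
    (hS0l : 1+2*qq ≤ S0) (hS0u : S0 ≤ 1+2*qq+0.001)
    (hS1l : 2*qq ≤ S1) (hS1u : S1 ≤ 2*qq+0.001)
    (hS2l : 2*qq ≤ S2) (hS2u : S2 ≤ 2*qq+0.001)
    (hS3l : 2*qq ≤ S3) (hS3u : S3 ≤ 2*qq+0.001) :
    0 ≤ p^2*(S2*S0 - S1*S1) - p*(S1*S0) - (p^3*s^2/2)*(S3*S0 - S2*S1) := by
  have hq0 : (0:ℝ) < qq := by linarith
  have hs0 : (0:ℝ) ≤ s^2 := sq_nonneg s
  have hppos : (0:ℝ) < p := by linarith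
  have hS0p : (0:ℝ) ≤ S0 := by linarith
  have hS1p : (0:ℝ) ≤ S1 := by linarith
  have hS2p : (0:ℝ) ≤ S2 := by linarith
  have hS3p : (0:ℝ) ≤ S3 := by linarith
  have hq001 : (0:ℝ) ≤ 2*qq + 0.001 := by linarith
  have hA1 : 2*qq*(1+2*qq) ≤ S2 * S0 := mul_le_mul hS2l hS0l (by linarith) hS2p
  have hA2 : S1 * S1 ≤ (2*qq+0.001)*(2*qq+0.001) := mul_le_mul hS1u hS1u hS1p hq001
  have hA : 2*qq*(1+2*qq) - (2*qq+0.001)*(2*qq+0.001) ≤ S2 * S0 - S1 * S1 := by linarith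
  have hAl : (0:ℝ) ≤ 2*qq*(1+2*qq) - (2*qq+0.001)*(2*qq+0.001) := by nlinarith [hq1, hq0]
  have hB : S1 * S0 ≤ (2*qq+0.001)*(1+2*qq+0.001) := mul_le_mul hS1u hS0u hS0p hq001
  have hC1 : S3 * S0 ≤ (2*qq+0.001)*(1+2*qq+0.001) := mul_le_mul hS3u hS0u hS0p hq001
  have hC2 : 2*qq*(2*qq) ≤ S2 * S1 := mul_le_mul hS2l hS1l (by linarith) hS2p
  have hC : S3 * S0 - S2 * S1 ≤ (2*qq+0.001)*(1+2*qq+0.001) - 2*qq*(2*qq) := by linarith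
  have hC3 : 2*qq*(1+2*qq) ≤ S3 * S0 := mul_le_mul hS3l hS0l (by linarith) hS3p
  have hC4 : S2 * S1 ≤ (2*qq+0.001)*(2*qq+0.001) := mul_le_mul hS2u hS1u hS1p hq001
  have hCpos : (0:ℝ) ≤ S3 * S0 - S2 * S1 := by linarith
  have hπ2l : (9.869:ℝ) ≤ p^2 := by
    have h := mul_le_mul hp1.le hp1.le (by norm_num) hppos.le
    calc (9.869:ℝ) ≤ 3.1415*3.1415 := by norm_num
    _ ≤ p*p := h
    _ = p^2 := by ring
  have hπsq : p^2 ≤ 9.8697 := by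
    have h := mul_le_mul hp2.le hp2.le hppos.le (by norm_num)
    calc p^2 = p*p := by ring
    _ ≤ 3.1416*3.1416 := h
    _ ≤ 9.8697 := by norm_num
  have hπ3u : p^3 ≤ (31.007:ℝ) := by
    have h := mul_le_mul hp2.le hπsq (by positivity) (by norm_num)
    calc p^3 = p*p^2 := by ring
    _ ≤ 3.1416*9.8697 := h
    _ ≤ 31.007 := by norm_num
  have hπ3s : p^3*s^2/2 ≤ 4.41 := by
    have h2 : (0:ℝ) ≤ p^3 := by positivity
    have h := mul_le_mul hπ3u hs2 hs0 (by norm_num)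
    calc p^3*s^2/2 ≤ 31.007*(64/225)/2 := by linarith
    _ ≤ 4.41 := by norm_num
  have hπ3s0 : 0 ≤ p^3*s^2/2 := by positivity
  have ht3 : (p^3*s^2/2)*(S3 * S0 - S2 * S1)
      ≤ 4.41*((2*qq+0.001)*(1+2*qq+0.001) - 2*qq*(2*qq)) :=
    mul_le_mul hπ3s hC hCpos (by norm_num)
  have ht1 : (9.869:ℝ)*(2*qq*(1+2*qq) - (2*qq+0.001)*(2*qq+0.001)) ≤ p^2*(S2 * S0 - S1 * S1) :=
    mul_le_mul hπ2l hA hAl (by positivity)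
  have ht2 : p*(S1 * S0) ≤ 3.1416*((2*qq+0.001)*(1+2*qq+0.001)) := by
    have h0 : 0 ≤ S1 * S0 := mul_nonneg hS1p hS0p
    have := mul_le_mul hp2.le hB h0 (by norm_num)
    linarith
  have hf := fq_nonneg hq1 hq2
  linarith [ht1, ht2, ht3, hf]

set_option maxHeartbeats 1000000 in
lemma key_small {r : ℝ} (hr0 : 0 ≤ r) (hr : r ≤ 1/5) :
    S 0 * S 0 ≤ theta (Real.exp (2*r)) * theta (Real.exp (2*r))⁻¹ := by
  have hpi := Real.pi_pos
  set x := Real.exp (2*r) with hxdef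
  set c := Real.cosh (2*r) with hcdef
  set s := Real.sinh (2*r) with hsdef
  have hx : 0 < x := Real.exp_pos _
  have hxc : x = c + s := (Real.cosh_add_sinh (2*r)).symm
  have hxi : x⁻¹ = c - s := by
    rw [← Real.exp_neg]
    exact (Real.cosh_sub_sinh (2*r)).symm
  have hs0 : 0 ≤ s := by
    rw [hsdef, show (0:ℝ) = Real.sinh 0 by simp]
    exact Real.sinh_le_sinh.mpr (by linarith)
  have hs1 : s ≤ 8/15 := by
    have := Real.sinh_le_sinh.mpr (show 2*r ≤ 2/5 by linarith)
    linarith [sinh_04]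
  have hc2 : c^2 = 1 + s^2 := by rw [hcdef, hsdef, Real.cosh_sq]; ring
  have hc1 : 1 ≤ c := Real.one_le_cosh _
  -- the function F and its symmetrization
  set F : ℤ × ℤ → ℝ := fun p => Real.exp (-π * (p.1:ℝ)^2 * x) * Real.exp (-π * (p.2:ℝ)^2 * x⁻¹)
    with hFdef
  have hFsum : Summable F :=
    (summable_theta hx).mul_of_nonneg (summable_theta (inv_pos.mpr hx))
      (fun n => (Real.exp_pos _).le) (fun n => (Real.exp_pos _).le)
  have hFswapsum : Summable (fun p : ℤ × ℤ => F p.swap) := by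
    have h := (summable_theta (inv_pos.mpr hx)).mul_of_nonneg (summable_theta hx)
      (fun n => (Real.exp_pos _).le) (fun n => (Real.exp_pos _).le)
    exact h.congr fun p => mul_comm _ _
  have hswap_eq : ∑' p : ℤ × ℤ, F p.swap = ∑' p, F p := by
    have h := (Equiv.prodComm ℤ ℤ).tsum_eq F
    simp only [Equiv.prodComm_apply] at h
    exact h
  have h3 : theta x * theta x⁻¹ = ∑' p : ℤ × ℤ, (F p + F p.swap)/2 := by
    have hh : ∑' p : ℤ × ℤ, (F p + F p.swap)/2 = ∑' p, F p := by
      rw [tsum_div_const, Summable.tsum_add hFsum hFswapsum, hswap_eq]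
      ring
    rw [theta_prod hx, ← hFdef, ← hh]
  -- the lower bound function G
  set G : ℤ × ℤ → ℝ := fun p =>
    V 0 p.1 * V 0 p.2
    + (π^2*s^2/2) * (V 2 p.1 * V 0 p.2 + V 0 p.1 * V 2 p.2 - 2 * (V 1 p.1 * V 1 p.2))
    - (π*s^2/2) * (V 1 p.1 * V 0 p.2 + V 0 p.1 * V 1 p.2)
    - (π^3*s^4/4) * (V 3 p.1 * V 0 p.2 + V 0 p.1 * V 3 p.2 -
        (V 2 p.1 * V 1 p.2 + V 1 p.1 * V 2 p.2)) with hGdef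
  have hterm : ∀ p : ℤ × ℤ, G p ≤ (F p + F p.swap)/2 := by
    intro p
    have hF1 : F p = Real.exp (-π*((((p.1:ℝ))^2+((p.2:ℝ))^2)*c + (((p.1:ℝ))^2-((p.2:ℝ))^2)*s)) := by
      simp only [hFdef]
      rw [← Real.exp_add]
      congr 1
      rw [hxi, hxc]; ring
    have hF2 : F p.swap = Real.exp (-π*((((p.1:ℝ))^2+((p.2:ℝ))^2)*c - (((p.1:ℝ))^2-((p.2:ℝ))^2)*s)) := by
      simp only [hFdef, Prod.fst_swap, Prod.snd_swap]
      rw [← Real.exp_add]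
      congr 1
      rw [hxi, hxc]; ring
    have hb := term_bound (K := ((p.1:ℝ))^2+((p.2:ℝ))^2) (D := ((p.1:ℝ))^2-((p.2:ℝ))^2)
      (c := c) (s := s) (by positivity) hs0 hc2 hc1
    rw [hF1, hF2]
    refine le_trans (le_of_eq ?_) hb
    rw [show -π*(((p.1:ℝ))^2+((p.2:ℝ))^2) = -π*((p.1:ℝ))^2 + -π*((p.2:ℝ))^2 by ring,
      Real.exp_add]
    simp only [hGdef, V]
    ring
  have hGsum : Summable G := by
    apply Summable.sub
    apply Summable.sub
    apply Summable.add
    · exact summable_W 0 0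
    · exact (((summable_W 2 0).add (summable_W 0 2)).sub
        ((summable_W 1 1).mul_left 2)).mul_left _
    · exact ((summable_W 1 0).add (summable_W 0 1)).mul_left _
    · exact (((summable_W 3 0).add (summable_W 0 3)).sub
        ((summable_W 2 1).add (summable_W 1 2))).mul_left _
  have hsymsum : Summable (fun p : ℤ × ℤ => (F p + F p.swap)/2) :=
    (hFsum.add hFswapsum).div_const 2
  have h4 : ∑' p, G p ≤ theta x * theta x⁻¹ := by
    rw [h3]
    exact Summable.tsum_le_tsum hterm hGsum hsymsum
  -- compute tsum of G
  have e1 : ∑' p : ℤ × ℤ, (V 2 p.1 * V 0 p.2 + V 0 p.1 * V 2 p.2 - 2 * (V 1 p.1 * V 1 p.2))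
      = S 2 * S 0 + S 0 * S 2 - 2 * (S 1 * S 1) := by
    rw [Summable.tsum_sub ((summable_W 2 0).add (summable_W 0 2)) ((summable_W 1 1).mul_left 2),
        Summable.tsum_add (summable_W 2 0) (summable_W 0 2), tsum_mul_left,
        tsum_W, tsum_W, tsum_W]
  have e2 : ∑' p : ℤ × ℤ, (V 1 p.1 * V 0 p.2 + V 0 p.1 * V 1 p.2)
      = S 1 * S 0 + S 0 * S 1 := by
    rw [Summable.tsum_add (summable_W 1 0) (summable_W 0 1), tsum_W, tsum_W]
  have e3 : ∑' p : ℤ × ℤ, (V 3 p.1 * V 0 p.2 + V 0 p.1 * V 3 p.2 -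
        (V 2 p.1 * V 1 p.2 + V 1 p.1 * V 2 p.2))
      = S 3 * S 0 + S 0 * S 3 - (S 2 * S 1 + S 1 * S 2) := by
    rw [Summable.tsum_sub ((summable_W 3 0).add (summable_W 0 3))
        ((summable_W 2 1).add (summable_W 1 2)),
        Summable.tsum_add (summable_W 3 0) (summable_W 0 3),
        Summable.tsum_add (summable_W 2 1) (summable_W 1 2), tsum_W, tsum_W, tsum_W, tsum_W]
  have h5 : ∑' p, G p = S 0 * S 0
      + (π^2*s^2/2) * (S 2 * S 0 + S 0 * S 2 - 2 * (S 1 * S 1))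
      - (π*s^2/2) * (S 1 * S 0 + S 0 * S 1)
      - (π^3*s^4/4) * (S 3 * S 0 + S 0 * S 3 - (S 2 * S 1 + S 1 * S 2)) := by
    simp only [hGdef]
    rw [Summable.tsum_sub (by
        exact ((summable_W 0 0).add ((((summable_W 2 0).add (summable_W 0 2)).sub
          ((summable_W 1 1).mul_left 2)).mul_left _)).sub
          (((summable_W 1 0).add (summable_W 0 1)).mul_left _))
      ((((summable_W 3 0).add (summable_W 0 3)).sub
          ((summable_W 2 1).add (summable_W 1 2))).mul_left _)]
    rw [Summable.tsum_sub ((summable_W 0 0).add ((((summable_W 2 0).add (summable_W 0 2)).sub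
          ((summable_W 1 1).mul_left 2)).mul_left _))
        (((summable_W 1 0).add (summable_W 0 1)).mul_left _)]
    rw [Summable.tsum_add (summable_W 0 0) ((((summable_W 2 0).add (summable_W 0 2)).sub
          ((summable_W 1 1).mul_left 2)).mul_left _)]
    rw [tsum_mul_left, tsum_mul_left, tsum_mul_left, tsum_W, e1, e2, e3]
  -- numeric endgame
  have hS0l : 1 + 2*q ≤ S 0 := by have := S_lower 0; norm_num [V] at this; linarith
  have hS0u : S 0 ≤ 1 + 2*q + 0.001 := by
    have := S_upper 0 (by norm_num); norm_num [V] at this; linarith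
  have hS1l : 2*q ≤ S 1 := by have := S_lower 1; norm_num [V] at this; linarith
  have hS1u : S 1 ≤ 2*q + 0.001 := by
    have := S_upper 1 (by norm_num); norm_num [V] at this; linarith
  have hS2l : 2*q ≤ S 2 := by have := S_lower 2; norm_num [V] at this; linarith
  have hS2u : S 2 ≤ 2*q + 0.001 := by
    have := S_upper 2 (by norm_num); norm_num [V] at this; linarith
  have hS3l : 2*q ≤ S 3 := by have := S_lower 3; norm_num [V] at this; linarith
  have hS3u : S 3 ≤ 2*q + 0.001 := by
    have := S_upper 3 (by norm_num); norm_num [V] at this; linarith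
  have hs2 : s^2 ≤ 64/225 := by nlinarith
  have hX : 0 ≤ π^2*(S 2 * S 0 - S 1 * S 1) - π*(S 1 * S 0)
      - (π^3*s^2/2)*(S 3 * S 0 - S 2 * S 1) :=
    numeric_X Real.pi_gt_d4 Real.pi_lt_d4 q_gt q_lt hs2 hS0l hS0u hS1l hS1u hS2l hS2u hS3l hS3u
  have hfinal : 0 ≤ (π^2*s^2/2) * (S 2 * S 0 + S 0 * S 2 - 2 * (S 1 * S 1))
      - (π*s^2/2) * (S 1 * S 0 + S 0 * S 1)
      - (π^3*s^4/4) * (S 3 * S 0 + S 0 * S 3 - (S 2 * S 1 + S 1 * S 2)) := by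
    have hexpand : (π^2*s^2/2) * (S 2 * S 0 + S 0 * S 2 - 2 * (S 1 * S 1))
      - (π*s^2/2) * (S 1 * S 0 + S 0 * S 1)
      - (π^3*s^4/4) * (S 3 * S 0 + S 0 * S 3 - (S 2 * S 1 + S 1 * S 2))
        = s^2 * (π^2*(S 2 * S 0 - S 1 * S 1) - π*(S 1 * S 0)
            - (π^3*s^2/2)*(S 3 * S 0 - S 2 * S 1)) := by ring
    rw [hexpand]
    exact mul_nonneg (sq_nonneg s) hX
  linarith [h4, h5.symm.le, hfinal, h5]

lemma theta_one_S0 : theta 1 = S 0 := by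
  rw [theta, S]
  exact tsum_congr fun n => by simp [V]

lemma theta_one_lt : theta 1 ≤ 1.101 := by
  rw [theta_one_S0]
  have h := S_upper 0 (by norm_num)
  have hq := q_lt
  norm_num [V] at h
  linarith

lemma exp_neg_two (r : ℝ) : Real.exp (-2*r) = (Real.exp (2*r))⁻¹ := by
  rw [← Real.exp_neg]
  ring_nf

lemma sqrt_exp_two (r : ℝ) : Real.sqrt (Real.exp (2*r)) = Real.exp r := by
  rw [← Real.exp_half]
  norm_num

lemma theta_funct (r : ℝ) :
    theta (Real.exp (-2*r)) = Real.exp r * theta (Real.exp (2*r)) := by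
  rw [exp_neg_two, theta_inv (Real.exp_pos _), sqrt_exp_two]

lemma key_nonneg {r : ℝ} (hr0 : 0 ≤ r) :
    theta 1 * theta 1 ≤ theta (Real.exp (2*r)) * theta (Real.exp (2*r))⁻¹ := by
  rcases le_total r (1/5) with h|h
  · rw [theta_one_S0]
    exact key_small hr0 h
  · have hx : (0:ℝ) < Real.exp (2*r) := Real.exp_pos _
    have hθ1 : theta 1 ≤ 1.101 := theta_one_lt
    have hθ1p : 0 < theta 1 := theta_pos one_pos
    have hexp : (1.22:ℝ) ≤ Real.exp r := by
      have h2 := quad_le_exp (show (0:ℝ) ≤ 1/5 by norm_num)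
      have h3 : Real.exp (1/5) ≤ Real.exp r := Real.exp_le_exp.mpr h
      norm_num at h2
      linarith
    have hθx : 1 ≤ theta (Real.exp (2*r)) := one_le_theta hx
    rw [theta_inv hx, sqrt_exp_two]
    have hθθ : (1:ℝ) ≤ theta (Real.exp (2*r)) * theta (Real.exp (2*r)) := by nlinarith
    have h5 : theta 1 * theta 1 ≤ 1.212201 := by nlinarith
    have h6 : (1.22:ℝ) * 1 ≤ Real.exp r * (theta (Real.exp (2*r)) * theta (Real.exp (2*r))) :=
      mul_le_mul hexp hθθ (by norm_num) (Real.exp_pos r).le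
    nlinarith [h5, h6]

lemma key_all (r : ℝ) :
    theta 1 * theta 1 ≤ theta (Real.exp (2*r)) * theta ((Real.exp (2*r))⁻¹) := by
  rcases le_total 0 r with h|h
  · have := key_nonneg h
    exact this
  · have h2 := key_nonneg (neg_nonneg.mpr h)
    have e1 : Real.exp (2*(-r)) = (Real.exp (2*r))⁻¹ := by
      rw [← Real.exp_neg]
      ring_nf
    rw [e1, inv_inv] at h2
    linarith [h2, mul_comm (theta ((Real.exp (2*r))⁻¹)) (theta (Real.exp (2*r)))]

end ThetaPf

/-- `f(r) = θ(1)/√(θ(e^{2r})θ(e^{-2r})) = θ(1)e^{-r/2}/θ(e^{2r})`;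
in particular `f` is even, `f(0) = 1`, and `0 < f(r) ≤ 1` for all real `r`. -/
theorem fchar_properties :
    (∀ r : ℝ,
      fchar r = theta 1 / Real.sqrt (theta (Real.exp (2 * r)) * theta (Real.exp (-2 * r))) ∧
      fchar r = theta 1 * Real.exp (-r/2) / theta (Real.exp (2 * r))) ∧
    (∀ r : ℝ, fchar (-r) = fchar r) ∧
    fchar 0 = 1 ∧
    (∀ r : ℝ, 0 < fchar r ∧ fchar r ≤ 1) := by
  have hθ1p : 0 < theta 1 := ThetaPf.theta_pos one_pos
  have hθxp : ∀ r : ℝ, 0 < theta (Real.exp r) := fun r => ThetaPf.theta_pos (Real.exp_pos r)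
  -- second form
  have eq2 : ∀ r : ℝ, fchar r = theta 1 * Real.exp (-r/2) / theta (Real.exp (2 * r)) := by
    intro r
    rw [fchar, ThetaPf.theta_funct r]
    rw [show Real.exp (r/2) = Real.exp r * Real.exp (-r/2) by rw [← Real.exp_add]; ring_nf]
    rw [show theta 1 * (Real.exp r * Real.exp (-r/2))
        = Real.exp r * (theta 1 * Real.exp (-r/2)) by ring]
    rw [mul_div_mul_left _ _ (Real.exp_ne_zero r)]
  -- sqrt identity
  have hsqrt : ∀ r : ℝ, Real.sqrt (theta (Real.exp (2 * r)) * theta (Real.exp (-2 * r)))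
      = Real.exp (r/2) * theta (Real.exp (2 * r)) := by
    intro r
    rw [ThetaPf.theta_funct r]
    rw [show theta (Real.exp (2*r)) * (Real.exp r * theta (Real.exp (2*r)))
        = Real.exp r * (theta (Real.exp (2*r)))^2 by ring]
    rw [Real.sqrt_mul (Real.exp_pos r).le, Real.sqrt_sq (hθxp (2*r)).le]
    rw [show Real.exp r = Real.exp (2*(r/2)) by ring_nf, ThetaPf.sqrt_exp_two]
  have eq1 : ∀ r : ℝ, fchar r
      = theta 1 / Real.sqrt (theta (Real.exp (2 * r)) * theta (Real.exp (-2 * r))) := by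
    intro r
    rw [hsqrt r, eq2 r]
    rw [show Real.exp (-r/2) = (Real.exp (r/2))⁻¹ by rw [← Real.exp_neg]; ring_nf]
    have hA : Real.exp (r/2) ≠ 0 := Real.exp_ne_zero (r/2)
    have hB : theta (Real.exp (2*r)) ≠ 0 := (hθxp (2*r)).ne'
    field_simp
  refine ⟨fun r => ⟨eq1 r, eq2 r⟩, ?_, ?_, ?_⟩
  · -- evenness
    intro r
    rw [eq2 r, fchar]
    have e1 : Real.exp (-2 * -r) = Real.exp (2*r) := by ring_nf
    rw [e1]
  · -- value at 0
    rw [fchar]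
    norm_num
    exact hθ1p.ne'
    
  · -- positivity and ≤ 1
    intro r
    constructor
    · rw [fchar]
      exact div_pos (mul_pos hθ1p (Real.exp_pos _)) (hθxp (-2*r))
    · rw [eq1 r]
      have hkey := ThetaPf.key_all r
      have harg : Real.exp (-2 * r) = (Real.exp (2*r))⁻¹ := ThetaPf.exp_neg_two r
      have hprod : theta 1 * theta 1 ≤ theta (Real.exp (2*r)) * theta (Real.exp (-2*r)) := by
        rw [harg]
        exact hkey
      have hsp : 0 < Real.sqrt (theta (Real.exp (2 * r)) * theta (Real.exp (-2 * r))) := by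
        rw [hsqrt r]
        exact mul_pos (Real.exp_pos _) (hθxp (2*r))
      rw [div_le_one hsp]
      have h2 : theta 1 = Real.sqrt (theta 1 * theta 1) := by
        rw [show theta 1 * theta 1 = (theta 1)^2 by ring, Real.sqrt_sq hθ1p.le]
      rw [h2]
      exact Real.sqrt_le_sqrt hprod
end
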